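/- In a regular return m = τ₁…τ₂ₙ for a state P of a medium, every cyclic rotation τᵢ…τ₂ₙτ₁…τᵢ₋₁ is an orderly return for the state Pτ₁⋯τᵢ₋₁, and consequently the opposite tokens τᵢ and τᵢ₊ₙ are mutual reverses. -/

import Mathlib

variable {S : Type*}

/-- Result of applying message `m` (a list of tokens) to state `P`. -/
def mApply (m : List (S → S)) (P : S) : S := m.foldl (fun s τ => τ s) P

/-- `τ'` is a reverse of `τ`. -/
def IsReverse (τ τ' : S → S) : Prop := ∀ P Q : S, P ≠ Q → (τ P = Q ↔ τ' Q = P)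

/-- `(S, T)` is a token system. -/
def IsTokenSystem (T : Set (S → S)) : Prop :=
  Nontrivial S ∧ T.Nonempty ∧ ∀ τ ∈ T, τ ≠ id

/-- `m` is a message of the token system with token set `T`. -/
def IsMsg (T : Set (S → S)) (m : List (S → S)) : Prop := ∀ τ ∈ m, τ ∈ T

/-- `m` is stepwise effective for `P`. -/
def StepwiseEff : List (S → S) → S → Prop
  | [], _ => True
  | τ :: rest, P => τ P ≠ P ∧ StepwiseEff rest (τ P)

/-- `m` is consistent: it contains no token together with a reverse of it. -/
def Consistent (m : List (S → S)) : Prop :=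
  ∀ τ ∈ m, ∀ τ' ∈ m, ¬ IsReverse τ τ'

/-- `m` is concise for `P`. -/
def Concise (T : Set (S → S)) (m : List (S → S)) (P : S) : Prop :=
  IsMsg T m ∧ Consistent m ∧ StepwiseEff m P ∧ m.Nodup

/-- `m` is a return message for `P`. -/
def IsReturn (m : List (S → S)) (P : S) : Prop :=
  StepwiseEff m P ∧ mApply m P = P

/-- `m` is vacuous: its indices partition into pairs of mutually reverse tokens. -/
def Vacuous (m : List (S → S)) : Prop :=
  ∃ σ : Equiv.Perm (Fin m.length),
    (∀ i, σ i ≠ i) ∧ (∀ i, σ (σ i) = i) ∧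
    ∀ i, IsReverse (m.get i) (m.get (σ i))

/-- `(S, T)` is a medium: token system satisfying [Ma] and [Mb]. -/
def IsMedium (T : Set (S → S)) : Prop :=
  IsTokenSystem T ∧
  (∀ P Q : S, P ≠ Q → ∃ m, Concise T m P ∧ mApply m P = Q) ∧
  (∀ (m : List (S → S)) (P : S), IsMsg T m → IsReturn m P → Vacuous m)

/-- Content of a message: its set of tokens. -/
def msgContent (m : List (S → S)) : Set (S → S) := {τ | τ ∈ m}

/-- Token content of a state `P`. -/
def SContent (T : Set (S → S)) (P : S) : Set (S → S) :=
  {τ | ∃ (V : S) (m : List (S → S)), Concise T m V ∧ mApply m V = P ∧ τ ∈ m}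

/-- `mr` is the reverse message `τ̃ₙ…τ̃₁` of `m = τ₁…τₙ`. -/
def IsReverseOfMsg (m mr : List (S → S)) : Prop :=
  List.Forall₂ (fun τ τ' => IsReverse τ τ' ∧ IsReverse τ' τ) m mr.reverse

/-- An orderly return for `P`: a message `q · ñ` where `q`, `nn` are concise
messages producing the same state `V ≠ P` from `P`, and `ñ` reverses `nn`. -/
def OrderlyReturn (T : Set (S → S)) (m : List (S → S)) (P : S) : Prop :=
  ∃ q nn nr : List (S → S), Concise T q P ∧ Concise T nn P ∧
    mApply q P = mApply nn P ∧ mApply q P ≠ P ∧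
    IsReverseOfMsg nn nr ∧ m = q ++ nr

/-!
A regular return `m` is in particular a return, so by axiom [Mb] its positions are paired off
into mutually reverse tokens. Two positions at distance less than `n` lie in a common window
`τᵢ…τᵢ₊ₙ₋₁` with `i < n`, which is concise and hence consistent, so they are never paired;
position `k < n` is therefore paired with some position `≥ k + n`, and counting forces it to be
`k + n`. So the second half of `m` is its first half with every token reversed, i.e.
`m.rotate n = m.map reverseToken`, and this identity passes to every rotation of `m`.
A rotation starting at `i ≥ n` then begins with the window at `i - n`, token by token reversed,
which is again concise; and a return whose second half undoes its concise first half token by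
token is an orderly return.
-/

open List

theorem mApply_append (a b : List (S → S)) (P : S) :
    mApply (a ++ b) P = mApply b (mApply a P) :=
  foldl_append

theorem stepwiseEff_append {a b : List (S → S)} {P : S} :
    StepwiseEff (a ++ b) P ↔ StepwiseEff a P ∧ StepwiseEff b (mApply a P) := by
  induction a generalizing P with
  | nil => simp [StepwiseEff, mApply]
  | cons τ l ih => simp only [cons_append, StepwiseEff, ih, and_assoc]; rfl

theorem StepwiseEff.take {m : List (S → S)} {P : S} (h : StepwiseEff m P) (k : ℕ) :
    StepwiseEff (m.take k) P := by
  rw [← take_append_drop k m, stepwiseEff_append] at h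
  exact h.1

theorem IsReturn.rotate {m : List (S → S)} {P : S} (h : IsReturn m P) {i : ℕ}
    (hi : i ≤ m.length) : IsReturn (m.rotate i) (mApply (m.take i) P) := by
  obtain ⟨hse, hback⟩ := h
  rw [← take_append_drop i m] at hse hback
  rw [stepwiseEff_append] at hse
  rw [mApply_append] at hback
  rw [rotate_eq_drop_append_take hi, IsReturn, stepwiseEff_append, mApply_append, hback]
  exact ⟨⟨hse.2, hse.1⟩, rfl⟩

theorem IsReverse.symm {τ τ' : S → S} (h : IsReverse τ τ') : IsReverse τ' τ :=
  fun P Q hPQ => (h Q P hPQ.symm).symm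

theorem IsReverse.unique {τ τ₁ τ₂ : S → S} (h₁ : IsReverse τ τ₁) (h₂ : IsReverse τ τ₂) :
    τ₁ = τ₂ := by
  funext Q
  by_cases hQ : τ₁ Q = Q
  · by_contra hne
    have hQ₂ : τ₂ Q ≠ Q := fun h => hne (hQ.trans h.symm)
    exact hQ₂ (((h₁ _ Q hQ₂).1 ((h₂ _ Q hQ₂).2 rfl)).symm.trans hQ)
  · exact ((h₂ _ Q hQ).1 ((h₁ _ Q hQ).2 rfl)).symm

theorem StepwiseEff.undo {w v : List (S → S)} {A : S} (hs : StepwiseEff w A)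
    (h : Forall₂ IsReverse w v) :
    StepwiseEff v.reverse (mApply w A) ∧ mApply v.reverse (mApply w A) = A := by
  induction h generalizing A with
  | nil => simp [StepwiseEff, mApply]
  | @cons a b w v hab _ ih =>
    obtain ⟨hA, hw⟩ := hs
    have hb : b (a A) = A := (hab A (a A) (Ne.symm hA)).1 rfl
    obtain ⟨ih₁, ih₂⟩ := ih hw
    have hmid : mApply v.reverse (mApply (a :: w) A) = a A := ih₂
    rw [reverse_cons, stepwiseEff_append, mApply_append, hmid]
    exact ⟨⟨ih₁, by rw [hb]; exact Ne.symm hA, trivial⟩, hb⟩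

theorem OrderlyReturn.isReturn {T : Set (S → S)} {m : List (S → S)} {P : S}
    (h : OrderlyReturn T m P) : IsReturn m P := by
  obtain ⟨q, nn, nr, hq, hnn, hV, -, hrev, rfl⟩ := h
  obtain ⟨hse, hback⟩ := hnn.2.2.1.undo (hrev.imp fun _ _ h => h.1)
  rw [reverse_reverse, ← hV] at hse hback
  rw [IsReturn, stepwiseEff_append, mApply_append]
  exact ⟨⟨hq.2.2.1, hse⟩, hback⟩

theorem Concise.reverse {T : Set (S → S)} {w : List (S → S)} {A B : S} (h : Concise T w A)
    (hs : StepwiseEff w.reverse B) : Concise T w.reverse B := by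
  obtain ⟨hT, hcons, -, hnd⟩ := h
  refine ⟨fun x hx => hT x (mem_reverse.1 hx), fun x hx y hy => ?_, hs, nodup_reverse.2 hnd⟩
  exact hcons x (mem_reverse.1 hx) y (mem_reverse.1 hy)

theorem List.getElem_mem_take_drop {α : Type*} {l : List α} {w n i : ℕ} (h₁ : w ≤ i)
    (h₂ : i < w + n) (hi : i < l.length) : l[i] ∈ (l.drop w).take n := by
  have : ((l.drop w).take n)[i - w]'(by simp only [length_take, length_drop]; omega) = l[i] := by
    simp only [getElem_take, getElem_drop]
    congr 1
    omega
  exact this ▸ getElem_mem _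

theorem List.drop_eq_map_take_of_rotate_eq_map {α : Type*} {l : List α} {f : α → α} {n : ℕ}
    (hlen : l.length = 2 * n) (h : l.rotate n = l.map f) : l.drop n = (l.take n).map f := by
  rw [rotate_eq_drop_append_take (by omega)] at h
  conv_rhs at h => rw [← take_append_drop n l, map_append]
  exact (append_inj h (by simp only [length_drop, length_map, length_take]; omega)).1

theorem List.rotate_rotate_eq_map {α : Type*} {l : List α} {f : α → α} {n : ℕ}
    (h : l.rotate n = l.map f) (i : ℕ) : (l.rotate i).rotate n = (l.rotate i).map f := by
  rw [rotate_rotate, add_comm, ← rotate_rotate, h, map_rotate]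

theorem Nat.eq_self_of_injOn_of_le {f : ℕ → ℕ} {n : ℕ} (hf : Set.InjOn f (Set.Iio n))
    (hlt : ∀ j < n, f j < n) (hle : ∀ j < n, j ≤ f j) {j : ℕ} (hj : j < n) : f j = j := by
  have hf' : Set.InjOn f ↑(Finset.range n) := by rwa [Finset.coe_range]
  have himg : (Finset.range n).image f = Finset.range n := by
    refine Finset.eq_of_subset_of_card_le (fun x hx => ?_) (Finset.card_image_of_injOn hf').ge
    obtain ⟨a, ha, rfl⟩ := Finset.mem_image.1 hx
    exact Finset.mem_range.2 (hlt a (Finset.mem_range.1 ha))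
  have hsum : ∑ i ∈ Finset.range n, i = ∑ i ∈ Finset.range n, f i := by
    conv_lhs => rw [← himg]
    exact Finset.sum_image hf'
  exact ((Finset.sum_eq_sum_iff_of_le fun i hi => hle i (Finset.mem_range.1 hi)).1 hsum j
    (Finset.mem_range.2 hj)).symm

theorem Function.Injective.val_eq_add_of_add_le {L n : ℕ} {σ : Fin L → Fin L}
    (hσ : Function.Injective σ) (hL : L = 2 * n) (hle : ∀ j : Fin L, (j : ℕ) < n → j + n ≤ σ j)
    (j : Fin L) (hj : (j : ℕ) < n) : (σ j : ℕ) = j + n := by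
  let f : ℕ → ℕ := fun k => if h : k < L then (σ ⟨k, h⟩ : ℕ) - n else k
  have hf : ∀ k (h : k < L), f k = (σ ⟨k, h⟩ : ℕ) - n := fun k h => dif_pos h
  have hfj : f j = j := by
    refine Nat.eq_self_of_injOn_of_le (n := n) (fun a ha b hb hab => ?_) (fun k hk => ?_)
      (fun k hk => ?_) hj
    · simp only [Set.mem_Iio] at ha hb
      have := hle ⟨a, by omega⟩ ha
      have := hle ⟨b, by omega⟩ hb
      rw [hf a (by omega), hf b (by omega)] at hab
      exact congrArg Fin.val (hσ (Fin.ext (by omega) : σ ⟨a, by omega⟩ = σ ⟨b, by omega⟩))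
    · rw [hf k (by omega)]
      have := (σ ⟨k, by omega⟩).isLt
      omega
    · rw [hf k (by omega)]
      have := hle ⟨k, by omega⟩ hk
      simp only at this
      omega
  have := hle j hj
  rw [hf j j.isLt, Fin.eta] at hfj
  omega

theorem Vacuous.forall₂_isReverse_take_drop {m : List (S → S)} {n : ℕ} (hv : Vacuous m)
    (hlen : m.length = 2 * n) (hcons : ∀ i < n, Consistent ((m.drop i).take n)) :
    Forall₂ IsReverse (m.take n) (m.drop n) := by
  obtain ⟨σ, -, -, hσ⟩ := hv
  have hnear : ∀ a b : Fin m.length, (a : ℕ) < n → (b : ℕ) < a + n →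
      ¬ IsReverse (m.get a) (m.get b) := by
    intro a b ha hb
    have := b.isLt
    simp only [get_eq_getElem]
    exact hcons (min a b) (by omega) _ (getElem_mem_take_drop (by omega) (by omega) _) _
      (getElem_mem_take_drop (by omega) (by omega) _)
  have hfar : ∀ j : Fin m.length, (j : ℕ) < n → j + n ≤ σ j := fun j hj => by
    by_contra hlt
    exact hnear j _ hj (by omega) (hσ j)
  refine forall₂_iff_get.2 ⟨by simp only [length_take, length_drop]; omega, fun k h₁ h₂ => ?_⟩
  have hk : k < n := by rw [length_take] at h₁; omega
  have hσk : σ ⟨k, by omega⟩ = ⟨n + k, by omega⟩ :=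
    Fin.ext ((σ.injective.val_eq_add_of_add_le hlen hfar _ hk).trans (add_comm _ _))
  simpa [hσk] using hσ ⟨k, by omega⟩

open Classical in
/-- The reverse of `τ`, unique by `IsReverse.unique`; the junk value `id` if `τ` has none. -/
noncomputable def reverseToken (τ : S → S) : S → S :=
  if h : ∃ τ', IsReverse τ τ' then h.choose else id

theorem IsReverse.reverseToken_eq {τ τ' : S → S} (h : IsReverse τ τ') :
    reverseToken τ = τ' := by
  have hex : ∃ τ', IsReverse τ τ' := ⟨τ', h⟩
  rw [reverseToken, dif_pos hex]
  exact hex.choose_spec.unique h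

theorem List.Forall₂.eq_map_reverseToken {w v : List (S → S)} (h : Forall₂ IsReverse w v) :
    v = w.map reverseToken := by
  induction h with
  | nil => rfl
  | cons hab _ ih => rw [map_cons, hab.reverseToken_eq, ih]

theorem rotate_eq_map_reverseToken {m : List (S → S)} {n : ℕ} (hn : n ≤ m.length)
    (h : Forall₂ IsReverse (m.take n) (m.drop n)) : m.rotate n = m.map reverseToken := by
  conv_rhs => rw [← take_append_drop n m, map_append]
  rw [rotate_eq_drop_append_take hn, ← h.eq_map_reverseToken,
    ← (h.flip.imp fun _ _ h => IsReverse.symm h).eq_map_reverseToken]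

section Medium

variable {T : Set (S → S)} (hM : IsMedium T)
include hM

theorem IsMedium.exists_isReverse {τ : S → S} (hτ : τ ∈ T) :
    ∃ τ' ∈ T, IsReverse τ τ' := by
  obtain ⟨⟨-, -, hid⟩, hMa, hMb⟩ := hM
  obtain ⟨P, hP⟩ := Function.ne_iff.1 (hid τ hτ)
  obtain ⟨w, hw, hwP⟩ := hMa (τ P) P hP
  have hT : IsMsg T (τ :: w) := by
    intro x hx
    rcases mem_cons.1 hx with rfl | hx
    exacts [hτ, hw.1 x hx]
  obtain ⟨σ, -, -, hσ⟩ := hMb (τ :: w) P hT ⟨⟨hP, hw.2.2.1⟩, hwP⟩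
  exact ⟨_, hT _ (get_mem _ _), hσ ⟨0, by simp⟩⟩

theorem Concise.mApply_ne {w : List (S → S)} {A : S}
    (h : Concise T w A) (hw : w ≠ []) : mApply w A ≠ A := by
  intro hback
  obtain ⟨σ, -, -, hσ⟩ := hM.2.2 w A h.1 ⟨h.2.2.1, hback⟩
  let i : Fin w.length := ⟨0, length_pos_iff.2 hw⟩
  exact h.2.1 _ (get_mem _ _) _ (get_mem _ _) (hσ i)

theorem isReverse_reverseToken {τ : S → S} (hτ : τ ∈ T) :
    IsReverse τ (reverseToken τ) := by
  obtain ⟨τ', -, h⟩ := hM.exists_isReverse hτ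
  rwa [h.reverseToken_eq]

theorem reverseToken_mem {τ : S → S} (hτ : τ ∈ T) : reverseToken τ ∈ T := by
  obtain ⟨τ', hτ', h⟩ := hM.exists_isReverse hτ
  rwa [h.reverseToken_eq]

theorem reverseToken_reverseToken {τ : S → S} (hτ : τ ∈ T) :
    reverseToken (reverseToken τ) = τ :=
  (isReverse_reverseToken hM hτ).symm.reverseToken_eq

theorem forall₂_isReverse_map_reverseToken {w : List (S → S)} (hw : IsMsg T w) :
    Forall₂ IsReverse w (w.map reverseToken) :=
  forall₂_map_right_iff.2 (forall₂_same.2 fun x hx => isReverse_reverseToken hM (hw x hx))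

theorem Concise.map_reverseToken {w : List (S → S)} {A B : S} (h : Concise T w A)
    (hs : StepwiseEff (w.map reverseToken) B) : Concise T (w.map reverseToken) B := by
  obtain ⟨hT, hcons, -, hnd⟩ := h
  refine ⟨?_, ?_, hs, hnd.map_on fun x hx y hy hxy => ?_⟩
  · intro _ hx'
    obtain ⟨x, hx, rfl⟩ := mem_map.1 hx'
    exact reverseToken_mem hM (hT x hx)
  · rintro _ hx' _ hy' hxy
    obtain ⟨x, hx, rfl⟩ := mem_map.1 hx'
    obtain ⟨y, hy, rfl⟩ := mem_map.1 hy'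
    have hxy : x = reverseToken y := (isReverse_reverseToken hM (hT x hx)).symm.unique hxy
    exact hcons y hy x hx (hxy ▸ isReverse_reverseToken hM (hT y hy))
  · rw [← reverseToken_reverseToken hM (hT x hx), hxy, reverseToken_reverseToken hM (hT y hy)]

theorem OrderlyReturn.isMsg {m : List (S → S)} {P : S} (h : OrderlyReturn T m P) : IsMsg T m := by
  obtain ⟨q, nn, nr, hq, hnn, -, -, hrev, rfl⟩ := h
  have hnr : nr.reverse = nn.map reverseToken := (hrev.imp fun _ _ h => h.1).eq_map_reverseToken
  intro x hx
  rcases mem_append.1 hx with hx | hx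
  · exact hq.1 x hx
  · rw [← mem_reverse, hnr] at hx
    obtain ⟨y, hy, rfl⟩ := mem_map.1 hx
    exact reverseToken_mem hM (hnn.1 y hy)

theorem orderlyReturn_of_forall₂_isReverse {M : List (S → S)} {Q : S} {n : ℕ} (hn : n ≠ 0)
    (hlen : n ≤ M.length) (hret : IsReturn M Q) (hq : Concise T (M.take n) Q)
    (hrev : Forall₂ IsReverse (M.take n) (M.drop n)) : OrderlyReturn T M Q := by
  obtain ⟨hse, hback⟩ := hret
  rw [← take_append_drop n M, stepwiseEff_append] at hse
  rw [← take_append_drop n M, mApply_append] at hback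
  obtain ⟨hse', hback'⟩ := hse.2.undo (hrev.flip.imp fun _ _ h => IsReverse.symm h)
  rw [hback] at hse' hback'
  have hne : M.take n ≠ [] := ne_nil_of_length_pos (by rw [length_take]; omega)
  refine ⟨M.take n, (M.take n).reverse, M.drop n, hq, hq.reverse hse', hback'.symm,
    hq.mApply_ne hM hne, ?_, (take_append_drop n M).symm⟩
  exact forall₂_reverse_iff.2 (hrev.imp fun _ _ h => ⟨h, h.symm⟩)

theorem concise_take_rotate {m : List (S → S)} {P : S} {n : ℕ} (hlen : m.length = 2 * n)
    (hret : IsReturn m P) (hrot : m.rotate n = m.map reverseToken)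
    (hreg : ∀ i < n, Concise T ((m.drop i).take n) (mApply (m.take i) P)) {i : ℕ}
    (hi : i < 2 * n) : Concise T ((m.rotate i).take n) (mApply (m.take i) P) := by
  have hlow : ∀ j < n, Concise T ((m.rotate j).take n) (mApply (m.take j) P) := by
    intro j hj
    rw [rotate_eq_drop_append_take (by omega),
      take_append_of_le_length (by rw [length_drop]; omega)]
    exact hreg j hj
  rcases lt_or_ge i n with hin | hin
  · exact hlow i hin
  obtain ⟨j, rfl⟩ : ∃ j, i = j + n := ⟨i - n, by omega⟩
  have hwin : (m.rotate (j + n)).take n = ((m.rotate j).take n).map reverseToken := by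
    have hlen' : (m.rotate j).length = 2 * n := by simp [hlen]
    rw [← rotate_rotate, rotate_eq_drop_append_take (by omega),
      take_append_of_le_length (by simp only [length_drop, length_rotate]; omega),
      take_of_length_le (by simp only [length_drop, length_rotate]; omega),
      drop_eq_map_take_of_rotate_eq_map hlen' (rotate_rotate_eq_map hrot j)]
  have hse := (hret.rotate (i := j + n) (by omega)).1.take n
  rw [hwin] at hse ⊢
  exact (hlow j (by omega)).map_reverseToken hM hse

end Medium

/-- In a regular return, every cyclic rotation is an orderly return for the
corresponding intermediate state, and opposite tokens are mutual reverses. -/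
theorem stmt11 {T : Set (S → S)} (hM : IsMedium T) (P : S)
    (m : List (S → S)) (n : ℕ) (hlen : m.length = 2 * n)
    (hor : OrderlyReturn T m P)
    (hreg : ∀ i < n, Concise T ((m.drop i).take n) (mApply (m.take i) P)) :
    (∀ i < 2 * n, OrderlyReturn T (m.drop i ++ m.take i) (mApply (m.take i) P)) ∧
    (∀ i (hi : i < n),
      IsReverse (m.get ⟨i, by omega⟩) (m.get ⟨i + n, by omega⟩) ∧
      IsReverse (m.get ⟨i + n, by omega⟩) (m.get ⟨i, by omega⟩)) := by
  have hret : IsReturn m P := hor.isReturn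
  have hvac : Vacuous m := hM.2.2 m P (hor.isMsg hM) hret
  have hopp := hvac.forall₂_isReverse_take_drop hlen fun i hi => (hreg i hi).2.1
  refine ⟨fun i hi => ?_, fun i hi => ?_⟩
  · have hrot := rotate_eq_map_reverseToken (by omega) hopp
    have hwin := concise_take_rotate hM hlen hret hrot hreg hi
    have hdrop := drop_eq_map_take_of_rotate_eq_map (by simp [hlen])
      (rotate_rotate_eq_map hrot i)
    rw [← rotate_eq_drop_append_take (by omega)]
    exact orderlyReturn_of_forall₂_isReverse hM (by omega) (by rw [length_rotate]; omega)
      (hret.rotate (by omega)) hwin (hdrop ▸ forall₂_isReverse_map_reverseToken hM hwin.1)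
  · have := (forall₂_iff_get.1 hopp).2 i (by rw [length_take]; omega)
      (by rw [length_drop]; omega)
    simp only [get_eq_getElem, getElem_take, getElem_drop, Nat.add_comm n i] at this
    exact ⟨this, this.symm⟩
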